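/- arXiv:2104.07867 — 2 statements merged into one kernel-verified Lean document; each statement's English description precedes it below -/
import Mathlib

section
/- Fix s ≠ t in {1,…,N}, a real symmetric positive definite N×N matrix Θ with Θ(s,s) ≥ 0, Θ(t,t) ≥ 0, Θ(s,t) = Θ(t,s) ≤ 0, an N×M real matrix X, and constants M > 0, β ∈ ℝ. Define the objective along the edge-weight direction by F(c) = log det(Θ + c·e_{s,t}e_{s,t}^T) − (1/M)·Tr(X^T (Θ + c·e_{s,t}e_{s,t}^T) X) − β·‖Θ + c·e_{s,t}e_{s,t}^T‖₁. Then F has a right derivative at c = 0 equal to e_{s,t}^T Θ^{-1} e_{s,t} − (1/M)‖X^T e_{s,t}‖₂² − 4β. -/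
/-!
Along the direction `c ↦ Θ + c • e eᵀ` all three terms of the objective are explicit.
By the matrix determinant lemma `det (Θ + c • e eᵀ) = det Θ * (1 + c * eᵀ Θ⁻¹ e)`, so the
log-determinant is smooth at `0` with derivative `eᵀ Θ⁻¹ e`; the trace term is affine in `c`.
The sign conditions on `Θ` say that every entry of `Θ` has the sign of the corresponding entry
of `e eᵀ`, so for `c ≥ 0` no entry changes sign and the `ℓ¹` norm grows exactly like
`‖Θ‖₁ + c * ‖e eᵀ‖₁ = ‖Θ‖₁ + 4 c`. Only this last term forces a one-sided derivative.
-/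

open Matrix

/-- `eVec N s t` is the vector `e_{s,t} = e_s - e_t` in `ℝ^N`. -/
def eVec (N : ℕ) (s t : Fin N) : Fin N → ℝ :=
  Pi.single s 1 - Pi.single t 1

theorem det_add_smul_vecMulVec {m α : Type*} [Fintype m] [DecidableEq m] [CommRing α]
    {A : Matrix m m α} (hA : IsUnit A.det) (c : α) (u v : m → α) :
    (A + c • vecMulVec u v).det = A.det * (1 + c * (v ⬝ᵥ A⁻¹ *ᵥ u)) := by
  have hsmul : c • vecMulVec u v = vecMulVec (c • u) v := by
    ext i j
    simp only [Matrix.smul_apply, vecMulVec_apply, Pi.smul_apply, smul_eq_mul, mul_assoc]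
  rw [hsmul, vecMulVec_eq Unit, det_add_replicateCol_mul_replicateRow hA, Matrix.mul_assoc,
    ← replicateCol_mulVec, det_one_add_mul_comm, det_one_add_replicateCol_mul_replicateRow,
    mulVec_smul, dotProduct_smul, smul_eq_mul]

theorem hasDerivAt_log_det_add_smul_vecMulVec {m : Type*} [Fintype m] [DecidableEq m]
    {A : Matrix m m ℝ} (hA : A.det ≠ 0) (u v : m → ℝ) :
    HasDerivAt (fun c : ℝ => Real.log (A + c • vecMulVec u v).det) (v ⬝ᵥ A⁻¹ *ᵥ u) 0 := by
  simp_rw [det_add_smul_vecMulVec (isUnit_iff_ne_zero.mpr hA)]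
  have hlin : HasDerivAt (fun c : ℝ => A.det * (1 + c * (v ⬝ᵥ A⁻¹ *ᵥ u)))
      (A.det * (v ⬝ᵥ A⁻¹ *ᵥ u)) 0 := by
    simpa using (((hasDerivAt_id (0 : ℝ)).mul_const (v ⬝ᵥ A⁻¹ *ᵥ u)).const_add 1).const_mul A.det
  convert hlin.log (by simpa using hA) using 1
  rw [zero_mul, add_zero, mul_one, mul_div_cancel_left₀ _ hA]

section Trace

variable {l m α : Type*} [Fintype l] [Fintype m] [CommSemiring α]

theorem trace_mul_add_smul_mul (A : Matrix l m α) (B E : Matrix m m α) (C : Matrix m l α)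
    (c : α) : (A * (B + c • E) * C).trace = (A * B * C).trace + c * (A * E * C).trace := by
  rw [Matrix.mul_add, Matrix.add_mul, trace_add, Matrix.mul_smul, Matrix.smul_mul, trace_smul,
    smul_eq_mul]

theorem trace_transpose_mul_vecMulVec_mul (X : Matrix m l α) (u : m → α) :
    (Xᵀ * vecMulVec u u * X).trace = ∑ i, (Xᵀ *ᵥ u) i ^ 2 := by
  rw [mul_vecMulVec, vecMulVec_mul, trace_vecMulVec, ← mulVec_transpose]
  simp only [dotProduct, sq]

end Trace

theorem hasDerivAt_trace_mul_add_smul_mul {l m : Type*} [Fintype l] [Fintype m]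
    (A : Matrix l m ℝ) (B E : Matrix m m ℝ) (C : Matrix m l ℝ) (x : ℝ) :
    HasDerivAt (fun c : ℝ => (A * (B + c • E) * C).trace) (A * E * C).trace x := by
  simp_rw [trace_mul_add_smul_mul]
  simpa using ((hasDerivAt_id x).mul_const (A * E * C).trace).const_add (A * B * C).trace

theorem abs_add_of_mul_nonneg {α : Type*} [Ring α] [LinearOrder α] [IsStrictOrderedRing α]
    {a b : α} (h : 0 ≤ a * b) : |a + b| = |a| + |b| :=
  (abs_add_eq_add_abs_iff a b).mpr (mul_nonneg_iff.mp h)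

section EntrywiseNorm

variable {m n : Type*} [Fintype m] [Fintype n]

theorem sum_abs_add_smul_of_mul_nonneg {A B : Matrix m n ℝ} (hAB : ∀ i j, 0 ≤ A i j * B i j)
    {c : ℝ} (hc : 0 ≤ c) :
    ∑ i, ∑ j, |(A + c • B) i j| = ∑ i, ∑ j, |A i j| + c * ∑ i, ∑ j, |B i j| := by
  have hentry : ∀ i j, |(A + c • B) i j| = |A i j| + c * |B i j| := fun i j => by
    rw [Matrix.add_apply, Matrix.smul_apply, smul_eq_mul, abs_add_of_mul_nonneg, abs_mul,
      abs_of_nonneg hc]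
    nlinarith [hAB i j]
  simp only [hentry, Finset.sum_add_distrib, Finset.mul_sum]

theorem hasDerivWithinAt_sum_abs_add_smul {A B : Matrix m n ℝ}
    (hAB : ∀ i j, 0 ≤ A i j * B i j) {x : ℝ} (hx : 0 ≤ x) :
    HasDerivWithinAt (fun c : ℝ => ∑ i, ∑ j, |(A + c • B) i j|) (∑ i, ∑ j, |B i j|)
      (Set.Ici 0) x := by
  have hlin : HasDerivAt (fun c : ℝ => ∑ i, ∑ j, |A i j| + c * ∑ i, ∑ j, |B i j|)
      (∑ i, ∑ j, |B i j|) x := by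
    simpa using ((hasDerivAt_id x).mul_const (∑ i, ∑ j, |B i j|)).const_add (∑ i, ∑ j, |A i j|)
  exact hlin.hasDerivWithinAt.congr (fun c hc => sum_abs_add_smul_of_mul_nonneg hAB hc)
    (sum_abs_add_smul_of_mul_nonneg hAB hx)

theorem sum_sum_abs_vecMulVec (u : m → ℝ) (v : n → ℝ) :
    ∑ i, ∑ j, |vecMulVec u v i j| = (∑ i, |u i|) * ∑ j, |v j| := by
  simp only [vecMulVec_apply, abs_mul, Finset.sum_mul_sum]

end EntrywiseNorm

section EdgeVector

variable {N : ℕ} {s t : Fin N}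

theorem eVec_apply (hst : s ≠ t) (i : Fin N) :
    eVec N s t i = if i = s then 1 else if i = t then -1 else 0 := by
  by_cases his : i = s
  · subst his
    simp [eVec, hst]
  · by_cases hit : i = t
    · subst hit
      simp [eVec, his]
    · simp [eVec, his, hit]

theorem sum_abs_eVec (hst : s ≠ t) : ∑ i, |eVec N s t i| = 2 := by
  simp only [eVec_apply hst, apply_ite abs, abs_neg, abs_one, abs_zero]
  rw [Fintype.sum_eq_add s t hst]
  · norm_num [Ne.symm hst]
  · intro i hi
    simp [hi.1, hi.2]

theorem mul_vecMulVec_eVec_nonneg (hst : s ≠ t) {Θ : Matrix (Fin N) (Fin N) ℝ}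
    (hss : 0 ≤ Θ s s) (htt : 0 ≤ Θ t t) (hst_nonpos : Θ s t ≤ 0) (hts_nonpos : Θ t s ≤ 0)
    (i j : Fin N) : 0 ≤ Θ i j * vecMulVec (eVec N s t) (eVec N s t) i j := by
  simp only [vecMulVec_apply, eVec_apply hst]
  split_ifs <;> subst_vars <;> simp_all

end EdgeVector

theorem objective_right_derivative_general (N M : ℕ)
    (s t : Fin N) (hst : s ≠ t) (Θ : Matrix (Fin N) (Fin N) ℝ)
    (hpd : Θ.PosDef)
    (hss : 0 ≤ Θ s s) (htt : 0 ≤ Θ t t) (hsymst : Θ s t = Θ t s) (hneg : Θ s t ≤ 0)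
    (X : Matrix (Fin N) (Fin M) ℝ) (β : ℝ) :
    HasDerivWithinAt
      (fun c : ℝ =>
        Real.log (Θ + c • vecMulVec (eVec N s t) (eVec N s t)).det
          - (1 / (M : ℝ)) * (Xᵀ * (Θ + c • vecMulVec (eVec N s t) (eVec N s t)) * X).trace
          - β * ∑ i, ∑ j, |(Θ + c • vecMulVec (eVec N s t) (eVec N s t)) i j|)
      (eVec N s t ⬝ᵥ Θ⁻¹.mulVec (eVec N s t)
        - (1 / (M : ℝ)) * ∑ i, (Xᵀ.mulVec (eVec N s t) i) ^ 2 - 4 * β)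
      (Set.Ici 0) 0 := by
  set e := eVec N s t
  have hlog := hasDerivAt_log_det_add_smul_vecMulVec hpd.det_pos.ne' e e
  have htrace := hasDerivAt_trace_mul_add_smul_mul Xᵀ Θ (vecMulVec e e) X 0
  have hnorm := hasDerivWithinAt_sum_abs_add_smul
    (mul_vecMulVec_eVec_nonneg hst hss htt hneg (hsymst ▸ hneg)) le_rfl
  refine ((hlog.hasDerivWithinAt.sub (htrace.hasDerivWithinAt.const_mul (1 / (M : ℝ)))).sub
    (hnorm.const_mul β)).congr_deriv ?_
  rw [trace_transpose_mul_vecMulVec_mul, sum_sum_abs_vecMulVec, sum_abs_eVec hst]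
  ring

/-- **Gradient of the graphical-Lasso objective along an edge-weight direction.**
For `s ≠ t`, a symmetric positive definite `Θ` with `Θ(s,s) ≥ 0`, `Θ(t,t) ≥ 0`,
`Θ(s,t) = Θ(t,s) ≤ 0`, an `N×M` matrix `X` with `M > 0`, and `β ∈ ℝ`, the objective
`F(c) = log det(Θ + c·e e ᵀ) − (1/M)·Tr(Xᵀ(Θ + c·e e ᵀ)X) − β·‖Θ + c·e e ᵀ‖₁`
(with `e = e_{s,t}`) has right derivative at `c = 0` equal to
`eᵀ Θ⁻¹ e − (1/M)‖Xᵀ e‖₂² − 4β`. -/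
theorem objective_right_derivative (N M : ℕ) (hM : 0 < M)
    (s t : Fin N) (hst : s ≠ t) (Θ : Matrix (Fin N) (Fin N) ℝ)
    (hsym : Θ.IsSymm) (hpd : Θ.PosDef)
    (hss : 0 ≤ Θ s s) (htt : 0 ≤ Θ t t) (hsymst : Θ s t = Θ t s) (hneg : Θ s t ≤ 0)
    (X : Matrix (Fin N) (Fin M) ℝ) (β : ℝ) :
    HasDerivWithinAt
      (fun c : ℝ =>
        Real.log (Θ + c • vecMulVec (eVec N s t) (eVec N s t)).det
          - (1 / (M : ℝ)) * (Xᵀ * (Θ + c • vecMulVec (eVec N s t) (eVec N s t)) * X).trace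
          - β * ∑ i, ∑ j, |(Θ + c • vecMulVec (eVec N s t) (eVec N s t)) i j|)
      (eVec N s t ⬝ᵥ Θ⁻¹.mulVec (eVec N s t)
        - (1 / (M : ℝ)) * ∑ i, (Xᵀ.mulVec (eVec N s t) i) ^ 2 - 4 * β)
      (Set.Ici 0) 0 :=
  objective_right_derivative_general N M s t hst Θ hpd hss htt hsymst hneg X β
end

section
/- Let B ∈ ℝ^{|E|×N}, let W be diagonal with nonnegative diagonal entries and W^{1/2} its entrywise square root, let L = B^T W B, let P be a Moore–Penrose pseudoinverse of L, let C ∈ ℝ^{M×|E|}, and set X = P B^T W^{1/2} C^T. Fix s ≠ t and let v = W^{1/2} B P e_{s,t}. If (1 − ε)‖v‖₂² ≤ ‖C v‖₂² ≤ (1 + ε)‖v‖₂² for some ε ≥ 0, then (1 − ε) · R^eff(s,t) ≤ ‖X^T e_{s,t}‖₂² ≤ (1 + ε) · R^eff(s,t), where R^eff(s,t) = e_{s,t}^T P e_{s,t}. -/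
open Matrix

/-- **(1±ε)-approximation of effective resistances from measurements.** Let `L = Bᵀ W B`,
`P` a Moore–Penrose pseudoinverse of `L`, `X = P Bᵀ W^{1/2} Cᵀ`, `s ≠ t`, and
`v = W^{1/2} B P e_{s,t}`. If `(1−ε)‖v‖₂² ≤ ‖C v‖₂² ≤ (1+ε)‖v‖₂²` for some `ε ≥ 0`, then
`(1−ε) R^eff(s,t) ≤ ‖Xᵀ e_{s,t}‖₂² ≤ (1+ε) R^eff(s,t)` where
`R^eff(s,t) = e_{s,t}ᵀ P e_{s,t}`. -/
theorem measured_effective_resistance_approx (N m M : ℕ) (B : Matrix (Fin m) (Fin N) ℝ)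
    (w : Fin m → ℝ) (hw : ∀ i, 0 ≤ w i) (L P : Matrix (Fin N) (Fin N) ℝ)
    (hL : L = Bᵀ * Matrix.diagonal w * B)
    (h1 : L * P * L = L) (h2 : P * L * P = P)
    (h3 : (L * P)ᵀ = L * P) (h4 : (P * L)ᵀ = P * L)
    (C : Matrix (Fin M) (Fin m) ℝ) (X : Matrix (Fin N) (Fin M) ℝ)
    (hX : X = P * Bᵀ * Matrix.diagonal (fun i => Real.sqrt (w i)) * Cᵀ)
    (s t : Fin N) (hst : s ≠ t) (ε : ℝ) (hε : 0 ≤ ε)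
    (v : Fin m → ℝ)
    (hv : v = (Matrix.diagonal (fun i => Real.sqrt (w i)) * B * P).mulVec (eVec N s t))
    (hJL1 : (1 - ε) * ∑ i, (v i) ^ 2 ≤ ∑ i, (C.mulVec v i) ^ 2)
    (hJL2 : ∑ i, (C.mulVec v i) ^ 2 ≤ (1 + ε) * ∑ i, (v i) ^ 2) :
    (1 - ε) * (eVec N s t ⬝ᵥ P.mulVec (eVec N s t))
        ≤ ∑ i, (Xᵀ.mulVec (eVec N s t) i) ^ 2 ∧
      ∑ i, (Xᵀ.mulVec (eVec N s t) i) ^ 2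
        ≤ (1 + ε) * (eVec N s t ⬝ᵥ P.mulVec (eVec N s t)) := by
  set D : Matrix (Fin m) (Fin m) ℝ := Matrix.diagonal (fun i => Real.sqrt (w i)) with hD
  set e : Fin N → ℝ := eVec N s t with he
  -- L is symmetric
  have hLsym : Lᵀ = L := by
    rw [hL]
    simp [Matrix.transpose_mul, Matrix.mul_assoc]
  -- key identities from the Moore–Penrose axioms
  have hPL : P * L = L * Pᵀ := by
    rw [← h4, Matrix.transpose_mul, hLsym]
  have hLP : L * P = Pᵀ * L := by
    rw [← h3, Matrix.transpose_mul, hLsym]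
  -- s1 : P = P * Pᵀ * L
  have s1 : P = P * Pᵀ * L := by
    calc P = P * L * P := h2.symm
      _ = P * (L * P) := by rw [Matrix.mul_assoc]
      _ = P * (Pᵀ * L) := by rw [hLP]
      _ = P * Pᵀ * L := by rw [Matrix.mul_assoc]
  -- s2 : P = P * P * L
  have s2 : P = P * P * L := by
    calc P = P * Pᵀ * L := s1
      _ = P * Pᵀ * (L * P * L) := by rw [h1]
      _ = (P * Pᵀ * L) * P * L := by simp only [Matrix.mul_assoc]
      _ = P * P * L := by rw [← s1]
  -- c1 : P = P * L * Pᵀ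
  have c1 : P = P * L * Pᵀ := by
    calc P = P * P * L := s2
      _ = P * (P * L) := by rw [Matrix.mul_assoc]
      _ = P * (L * Pᵀ) := by rw [hPL]
      _ = P * L * Pᵀ := by rw [Matrix.mul_assoc]
  -- t2 : Pᵀ = L * Pᵀ * Pᵀ  (transpose of s2)
  have t2 : Pᵀ = L * Pᵀ * Pᵀ := by
    have := congrArg Matrix.transpose s2
    simpa [Matrix.transpose_mul, hLsym, Matrix.mul_assoc] using this
  -- c2 : Pᵀ = P * L * Pᵀ
  have c2 : Pᵀ = P * L * Pᵀ := by
    calc Pᵀ = L * Pᵀ * Pᵀ := t2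
      _ = (P * L) * Pᵀ := by rw [hPL]
  have hPsym : Pᵀ = P := by rw [c2, ← c1]
  -- D is symmetric and D * D = diagonal w
  have hDsym : Dᵀ = D := by rw [hD, Matrix.diagonal_transpose]
  have hDD : D * D = Matrix.diagonal w := by
    rw [hD, Matrix.diagonal_mul_diagonal]
    exact congrArg Matrix.diagonal (funext fun i => Real.mul_self_sqrt (hw i))
  set Mmat : Matrix (Fin m) (Fin N) ℝ := D * B * P with hM
  -- Mᵀ * M = P
  have hMM : Mmatᵀ * Mmat = P := by
    calc Mmatᵀ * Mmat = Pᵀ * (Bᵀ * Dᵀ) * (D * B * P) := by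
          rw [hM]; simp [Matrix.transpose_mul, Matrix.mul_assoc]
      _ = Pᵀ * (Bᵀ * (D * D) * B) * P := by
          rw [hDsym]; simp only [Matrix.mul_assoc]
      _ = Pᵀ * L * P := by rw [hDD, ← hL]
      _ = P * L * P := by rw [hPsym]
      _ = P := h2
  -- Xᵀ e = C v
  have hXe : Xᵀ.mulVec e = C.mulVec v := by
    have hXT : Xᵀ = C * Mmat := by
      rw [hX, hM]
      simp [Matrix.transpose_mul, hDsym, hPsym, Matrix.mul_assoc]
    rw [hXT, ← Matrix.mulVec_mulVec, ← hv]
  -- ∑ v i ^ 2 = e ⬝ᵥ P e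
  have hnorm : ∑ i, (v i) ^ 2 = e ⬝ᵥ P.mulVec e := by
    have hvv : ∑ i, (v i) ^ 2 = v ⬝ᵥ v := by
      simp [dotProduct, sq]
    rw [hvv, hv]
    calc (Mmat.mulVec e) ⬝ᵥ (Mmat.mulVec e)
        = (e ᵥ* Mmatᵀ) ⬝ᵥ (Mmat.mulVec e) := by rw [Matrix.vecMul_transpose]
      _ = e ⬝ᵥ Mmatᵀ.mulVec (Mmat.mulVec e) := (Matrix.dotProduct_mulVec _ _ _).symm
      _ = e ⬝ᵥ (Mmatᵀ * Mmat).mulVec e := by rw [Matrix.mulVec_mulVec]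
      _ = e ⬝ᵥ P.mulVec e := by rw [hMM]
  constructor
  · calc (1 - ε) * (e ⬝ᵥ P.mulVec e) = (1 - ε) * ∑ i, (v i) ^ 2 := by rw [hnorm]
      _ ≤ ∑ i, (C.mulVec v i) ^ 2 := hJL1
      _ = ∑ i, (Xᵀ.mulVec e i) ^ 2 := by rw [hXe]
  · calc ∑ i, (Xᵀ.mulVec e i) ^ 2 = ∑ i, (C.mulVec v i) ^ 2 := by rw [hXe]
      _ ≤ (1 + ε) * ∑ i, (v i) ^ 2 := hJL2
      _ = (1 + ε) * (e ⬝ᵥ P.mulVec e) := by rw [hnorm]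
end
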